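/- arXiv:1011.5375 — 4 statements merged into one kernel-verified Lean document; each statement's English description precedes it below -/
import Mathlib

section
/- Let k be a field of characteristic zero, A a commutative k-algebra, ∂ a locally nilpotent k-derivation of A, and f ∈ A with ∂(f) = 0. Let p : A → k be a k-algebra homomorphism with p(f) = 0, and let w : A → k be a k-linear map which is a derivation centered at p, i.e. w(gh) = p(g)·w(h) + p(h)·w(g) for all g, h ∈ A. Then for every g ∈ A and every natural number N with ∂^N(g) = 0, one has w( ∑_{i=0}^{N−1} (1/i!)·f^i·∂^i(g) ) = w(g) + w(f)·p(∂(g)). (In geometric terms: if Φ = exp(f∂) is the automorphism associated with the replica f∂ and p is a point at which f vanishes, then the tangent map of Φ at p is w ↦ w + df(w)·∂(p).) -/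
/-- Lemma 4.1: if `∂` is a locally nilpotent derivation, `f ∈ ker ∂`, and `p` is a point
(`k`-algebra homomorphism `A → k`) with `f(p) = 0`, then for any tangent vector `w` at `p`
(a derivation of `A` centered at `p`) the tangent map of the automorphism
`Φ = exp(f∂)` satisfies `dΦ(w) = w + df(w)·∂(p)`. -/
theorem tangent_map_of_replica_exponential
    {k A : Type*} [Field k] [CharZero k] [CommRing A] [Algebra k A]
    (D : Derivation k A A)
    (hD : ∀ a : A, ∃ N : ℕ, (D.toLinearMap ^ N) a = 0)
    (f : A) (hf : D f = 0)
    (p : A →ₐ[k] k) (hfp : p f = 0)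
    (w : A →ₗ[k] k)
    (hw : ∀ g h : A, w (g * h) = p g * w h + p h * w g) :
    ∀ (g : A) (N : ℕ), (D.toLinearMap ^ N) g = 0 →
      w (∑ i ∈ Finset.range N, ((i.factorial : k)⁻¹ • (f ^ i * (D.toLinearMap ^ i) g)))
        = w g + w f * p (D g) := by
  intro g N hg
  have hw1 : w 1 = 0 := by
    have := hw 1 1
    simpa using this
  have hpf : ∀ i : ℕ, 1 ≤ i → p (f ^ i) = 0 := by
    intro i hi
    rw [map_pow, hfp, zero_pow (by omega)]
  have hwf : ∀ i : ℕ, 2 ≤ i → w (f ^ i) = 0 := by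
    intro i hi
    induction i with
    | zero => omega
    | succ n ih =>
      rcases Nat.lt_or_ge n 2 with h | h
      · interval_cases n
        · omega
        · rw [pow_succ, hw, hfp, pow_one, hfp]; ring
      · rw [pow_succ, hw, hfp, hpf n (by omega), ih h]; ring
  have key : ∀ i : ℕ, w ((i.factorial : k)⁻¹ • (f ^ i * (D.toLinearMap ^ i) g))
      = (if i = 0 then w g else 0) + (if i = 1 then w f * p (D g) else 0) := by
    intro i
    rw [map_smul, smul_eq_mul, hw]
    match i with
    | 0 => simp [hw1]
    | 1 => simp [hfp, pow_one]; ring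
    | (n+2) =>
      rw [hpf (n+2) (by omega), hwf (n+2) (by omega)]
      simp
  rw [map_sum]
  simp_rw [key, Finset.sum_add_distrib, Finset.sum_ite_eq' (Finset.range N),
    Finset.mem_range]
  match N with
  | 0 =>
    have : g = 0 := by simpa using hg
    simp [this]
  | 1 =>
    have : D g = 0 := by simpa using hg
    simp [this]
  | (n+2) =>
    simp [Nat.lt_of_sub_eq_succ]
end

section
/- Let K be a field, n, m ≥ 1, and fix column indices k ≠ l in {1,…,m}. Let B and B′ be n×m matrices over K such that: (i) the k-th column of B is nonzero; (ii) B_{ij} = B′_{ij} for all i and all j ≠ l; and (iii) B_{ik}·B_{i′l} − B_{i′k}·B_{il} = B′_{ik}·B′_{i′l} − B′_{i′k}·B′_{il} for all row indices i, i′. Then there exists t ∈ K such that B′_{il} = B_{il} + t·B_{ik} for all i, i.e. B′ = B·(I + t·E_{kl}). -/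
open Matrix

theorem Matrix.mul_one_add_smul_single_eq_updateCol {ι κ R : Type*} [Fintype κ] [DecidableEq κ]
    [CommSemiring R] (B : Matrix ι κ R) (k l : κ) (t : R) :
    B * (1 + t • single k l (1 : R)) = B.updateCol l (fun i => B i l + t * B i k) := by
  rw [Matrix.mul_add, Matrix.mul_one, Matrix.mul_smul]
  ext i j
  rw [updateCol_apply]
  by_cases hj : j = l
  · subst hj
    simp
  · simp [hj]

theorem exists_eq_smul_of_mul_eq_mul {ι K : Type*} [Field K] {u w : ι → K} {i₀ : ι}
    (hu : u i₀ ≠ 0) (h : ∀ i, u i₀ * w i = u i * w i₀) : ∃ t : K, w = t • u := by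
  refine ⟨w i₀ / u i₀, funext fun i => ?_⟩
  rw [Pi.smul_apply, smul_eq_mul, div_mul_eq_mul_div, eq_div_iff hu, mul_comm, h, mul_comm]

theorem column_orbit_separation_general
    {K : Type*} [Field K] {n m : ℕ}
    (k l : Fin m) (hkl : k ≠ l)
    (B B' : Matrix (Fin n) (Fin m) K)
    (hcol : ∃ i, B i k ≠ 0)
    (heq : ∀ (i : Fin n) (j : Fin m), j ≠ l → B i j = B' i j)
    (hminor : ∀ i i' : Fin n,
      B i k * B i' l - B i' k * B i l = B' i k * B' i' l - B' i' k * B' i l) :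
    ∃ t : K, (∀ i, B' i l = B i l + t * B i k) ∧
      B' = B * (1 + t • Matrix.single k l (1 : K)) := by
  obtain ⟨i₀, hi₀⟩ := hcol
  have hk : ∀ i, B' i k = B i k := fun i => (heq i k hkl).symm
  -- The minors through row `i₀` make the change of column `l` proportional to column `k`.
  obtain ⟨t, ht⟩ : ∃ t : K, (fun i => B' i l - B i l) = t • fun i => B i k := by
    refine exists_eq_smul_of_mul_eq_mul hi₀ fun i => ?_
    have h := hminor i₀ i
    rw [hk, hk] at h
    linear_combination -h
  have hcolumn : ∀ i, B' i l = B i l + t * B i k := fun i => by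
    have h := congrFun ht i
    simp only [Pi.smul_apply, smul_eq_mul] at h
    linear_combination h
  refine ⟨t, hcolumn, ?_⟩
  rw [mul_one_add_smul_single_eq_updateCol]
  ext i j
  rw [updateCol_apply]
  split_ifs with hj
  · exact hj ▸ hcolumn i
  · exact (heq i j hj).symm

/-- Separation content of Lemma 4.4: the functions `B ↦ B_{ij}` (`j ≠ l`) and the
`2 × 2` minors `B ↦ B_{ik}B_{i'l} − B_{i'k}B_{il}` separate one-dimensional orbits of
the column operation group `B ↦ B·(I + t·E_{kl})`. -/
theorem column_orbit_separation
    {K : Type*} [Field K] {n m : ℕ} (hn : 1 ≤ n) (hm : 1 ≤ m)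
    (k l : Fin m) (hkl : k ≠ l)
    (B B' : Matrix (Fin n) (Fin m) K)
    (hcol : ∃ i, B i k ≠ 0)
    (heq : ∀ (i : Fin n) (j : Fin m), j ≠ l → B i j = B' i j)
    (hminor : ∀ i i' : Fin n,
      B i k * B i' l - B i' k * B i l = B' i k * B' i' l - B' i' k * B' i l) :
    ∃ t : K, (∀ i, B' i l = B i l + t * B i k) ∧
      B' = B * (1 + t • Matrix.single k l (1 : K)) :=
  column_orbit_separation_general k l hkl B B' hcol heq hminor
end

section
/- Let K be a field, n ≥ 2, and fix indices k ≠ l in {1,…,n}. Let B and B′ be symmetric n×n matrices over K such that B_{ll} ≠ 0 and: (i) B_{ij} = B′_{ij} for all i, j ≠ k; (ii) B_{ik}·B_{jl} − B_{jk}·B_{il} = B′_{ik}·B′_{jl} − B′_{jk}·B′_{il} for all i, j ≠ k; and (iii) B_{kk}·B_{ll} − B_{kl}·B_{lk} = B′_{kk}·B′_{ll} − B′_{kl}·B′_{lk}. Then there exists t ∈ K such that B′ = (I + t·E_{kl})·B·(I + t·E_{kl})ᵀ. -/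
/-!
Take `t = (B'_{lk} - B_{lk}) / B_{ll}`. Since the entries away from row and column `k` agree,
the minor with `j = l` is linear in `B'_{ik}` with coefficient `B_{ll} ≠ 0`, which forces
`B'_{ik} = B_{ik} + t B_{il}` for every `i ≠ k`; the `(k, l)`-minor then forces
`B'_{kk} = B_{kk} + 2t B_{kl} + t² B_{ll}`. These are exactly the entries of the congruence of `B`
by the transvection `I + t E_{kl}`.
-/

open Matrix

namespace Matrix

variable {n R : Type*} [DecidableEq n] [CommRing R]

theorem transpose_transvection (i j : n) (c : R) :
    (transvection i j c)ᵀ = transvection j i c := by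
  simp [transvection, transpose_single]

theorem one_add_smul_single_one (i j : n) (c : R) :
    1 + c • single i j (1 : R) = transvection i j c := by
  rw [smul_single, smul_eq_mul, mul_one, transvection]

theorem eq_transvection_mul_mul_transpose_of_apply [Fintype n] {k l : n} (t : R)
    {B B' : Matrix n n R} (hB : B.IsSymm) (hB' : B'.IsSymm)
    (hoff : ∀ i j, i ≠ k → j ≠ k → B' i j = B i j)
    (hcol : ∀ i, i ≠ k → B' i k = B i k + t * B i l)
    (hkk : B' k k = B k k + 2 * t * B k l + t ^ 2 * B l l) :
    B' = transvection k l t * B * (transvection k l t)ᵀ := by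
  rw [transpose_transvection]
  ext i j
  rcases eq_or_ne k i with rfl | hki <;> rcases eq_or_ne k j with rfl | hkj
  · rw [mul_transvection_apply_same, transvection_mul_apply_same,
      transvection_mul_apply_same, hkk, hB.apply l k]
    ring
  · rw [mul_transvection_apply_of_ne (hb := hkj.symm), transvection_mul_apply_same,
      ← hB'.apply, hcol j hkj.symm, hB.apply, hB.apply l]
  · rw [mul_transvection_apply_same, transvection_mul_apply_of_ne (ha := hki.symm),
      transvection_mul_apply_of_ne (ha := hki.symm), hcol i hki.symm]
  · rw [mul_transvection_apply_of_ne (hb := hkj.symm),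
      transvection_mul_apply_of_ne (ha := hki.symm), hoff i j hki.symm hkj.symm]

section MinorSolving

variable {n K : Type*} [Field K] {B B' : Matrix n n K} {k l : n}

theorem apply_eq_of_minor_eq (hll : B l l ≠ 0) {i : n} (hll' : B' l l = B l l)
    (hil : B' i l = B i l)
    (h : B i k * B l l - B l k * B i l = B' i k * B' l l - B' l k * B' i l) :
    B' i k = B i k + (B' l k - B l k) / B l l * B i l := by
  rw [hll', hil] at h
  field_simp
  linear_combination -h

theorem diag_apply_eq_of_minor_eq (hll : B l l ≠ 0) (hB : B.IsSymm) (hB' : B'.IsSymm) {t : K}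
    (hll' : B' l l = B l l) (hlk : B' l k = B l k + t * B l l)
    (h : B k k * B l l - B k l * B l k = B' k k * B' l l - B' k l * B' l k) :
    B' k k = B k k + 2 * t * B k l + t ^ 2 * B l l := by
  rw [hB'.apply l k, hll', hlk, hB.apply l k] at h
  rw [hB.apply l k]
  refine mul_right_cancel₀ hll ?_
  linear_combination -h

end MinorSolving

end Matrix

theorem symmetric_congruence_orbit_separation_general
    {K : Type*} [Field K] {n : ℕ}
    (k l : Fin n) (hkl : k ≠ l)
    (B B' : Matrix (Fin n) (Fin n) K)
    (hB : B.IsSymm) (hB' : B'.IsSymm)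
    (hll : B l l ≠ 0)
    (heq : ∀ i j : Fin n, i ≠ k → j ≠ k → B i j = B' i j)
    (hminor : ∀ i j : Fin n, i ≠ k → j ≠ k →
      B i k * B j l - B j k * B i l = B' i k * B' j l - B' j k * B' i l)
    (hminor' : B k k * B l l - B k l * B l k = B' k k * B' l l - B' k l * B' l k) :
    ∃ t : K, B' = (1 + t • Matrix.single k l (1 : K)) * B *
      (1 + t • Matrix.single k l (1 : K))ᵀ := by
  set t := (B' l k - B l k) / B l l
  have hll' : B' l l = B l l := (heq l l hkl.symm hkl.symm).symm
  have hcol : ∀ i, i ≠ k → B' i k = B i k + t * B i l := fun i hi =>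
    apply_eq_of_minor_eq hll hll' (heq i l hi hkl.symm).symm (hminor i l hi hkl.symm)
  have hkk : B' k k = B k k + 2 * t * B k l + t ^ 2 * B l l :=
    diag_apply_eq_of_minor_eq hll hB hB' hll' (hcol l hkl.symm) hminor'
  refine ⟨t, ?_⟩
  rw [one_add_smul_single_one]
  exact eq_transvection_mul_mul_transpose_of_apply t hB hB'
    (fun i j hi hj => (heq i j hi hj).symm) hcol hkk

/-- Separation content of Lemma 4.6: the functions `B ↦ B_{ij}` (`i, j ≠ k`), the minors
`B_{ik}B_{jl} − B_{jk}B_{il}` (`i, j ≠ k`) and the minor `B_{kk}B_{ll} − B_{kl}B_{lk}`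
separate the orbits of the congruence group `B ↦ (I + t·E_{kl})·B·(I + t·E_{kl})ᵀ`
through symmetric matrices with `B_{ll} ≠ 0`. -/
theorem symmetric_congruence_orbit_separation
    {K : Type*} [Field K] {n : ℕ} (hn : 2 ≤ n)
    (k l : Fin n) (hkl : k ≠ l)
    (B B' : Matrix (Fin n) (Fin n) K)
    (hB : B.IsSymm) (hB' : B'.IsSymm)
    (hll : B l l ≠ 0)
    (heq : ∀ i j : Fin n, i ≠ k → j ≠ k → B i j = B' i j)
    (hminor : ∀ i j : Fin n, i ≠ k → j ≠ k →
      B i k * B j l - B j k * B i l = B' i k * B' j l - B' j k * B' i l)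
    (hminor' : B k k * B l l - B k l * B l k = B' k k * B' l l - B' k l * B' l k) :
    ∃ t : K, B' = (1 + t • Matrix.single k l (1 : K)) * B *
      (1 + t • Matrix.single k l (1 : K))ᵀ :=
  symmetric_congruence_orbit_separation_general k l hkl B B' hB hB' hll heq hminor hminor'
end

section
/- Let p and q be coprime positive integers with p < q, and let m be a positive integer. Set k = gcd(q − p, m) and a = m/k. Then there exist positive integers d and s such that d·q − s·p = k and d ≡ s (mod a). -/
/-- The arithmetic lemma from the proof of Theorem 5.6: for coprime positive integers
`p < q` and a positive integer `m`, with `k = gcd(q − p, m)` and `a = m / k`, there are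
positive integers `d`, `s` with `d·q − s·p = k` and `d ≡ s (mod a)`. -/
theorem exists_solution_congruence_system
    (p q m : ℕ) (hp : 0 < p) (hq : 0 < q) (hm : 0 < m)
    (hpq : p < q) (hcop : Nat.Coprime p q) :
    ∃ d s : ℕ, 0 < d ∧ 0 < s ∧
      d * q = s * p + Nat.gcd (q - p) m ∧
      d ≡ s [MOD m / Nat.gcd (q - p) m] := by
  set n := q - p with hn
  set k := Nat.gcd n m with hk
  set a := m / k with ha
  have hn0 : 0 < n := Nat.sub_pos_of_lt hpq
  have hk0 : 0 < k := Nat.gcd_pos_of_pos_left _ hn0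
  have hkm : k ∣ m := Nat.gcd_dvd_right _ _
  have hkn : k ∣ n := Nat.gcd_dvd_left _ _
  have hak : a * k = m := Nat.div_mul_cancel hkm
  have ha0 : 0 < a := Nat.div_pos (Nat.le_of_dvd hm hkm) hk0
  have ham : a ∣ m := ⟨k, hak.symm⟩
  -- n is coprime to p
  have hnp : Nat.Coprime n p := by
    have h1 : Nat.gcd n p = Nat.gcd q p := by
      rw [hn]; exact Nat.gcd_sub_self_left (le_of_lt hpq)
    unfold Nat.Coprime
    rw [h1, Nat.gcd_comm]
    exact hcop
  -- gcd n (a*p) divides k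
  have hg : Nat.gcd n (a * p) ∣ k := by
    have h1 : Nat.gcd n (a * p) = Nat.gcd n a :=
      Nat.Coprime.gcd_mul_right_cancel_right a hnp.symm
    rw [h1]
    exact Nat.dvd_gcd (Nat.gcd_dvd_left _ _) ((Nat.gcd_dvd_right n a).trans ham)
  obtain ⟨c, hc⟩ := hg
  -- Bezout over ℤ
  set N : ℤ := (n : ℤ) with hN
  set AP : ℤ := ((a * p : ℕ) : ℤ) with hAP
  have hbez : (Nat.gcd n (a * p) : ℤ) = N * Int.gcdA N AP + AP * Int.gcdB N AP := by
    have := Int.gcd_eq_gcd_ab N AP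
    rwa [Int.gcd_natCast_natCast] at this
  set D0 : ℤ := Int.gcdA N AP * c with hD0
  set U0 : ℤ := Int.gcdB N AP * c with hU0
  have hsol : N * D0 + AP * U0 = (k : ℤ) := by
    rw [hD0, hU0]
    have : (k : ℤ) = (Nat.gcd n (a * p) : ℤ) * c := by exact_mod_cast hc
    rw [this, hbez]; ring
  set S0 : ℤ := D0 - (a : ℤ) * U0 with hS0
  set t : ℤ := D0.natAbs + S0.natAbs + 1 with ht
  have ht0 : 0 < t := by positivity
  set D : ℤ := D0 + t * (a * p) with hD
  set U : ℤ := U0 - t * n with hU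
  set S : ℤ := D - (a : ℤ) * U with hS
  have hap1 : (1 : ℤ) ≤ (a : ℤ) * p := by
    have : (1 : ℕ) ≤ a * p := Nat.one_le_iff_ne_zero.mpr (by positivity)
    exact_mod_cast this
  have haq1 : (1 : ℤ) ≤ (a : ℤ) * q := by
    have : (1 : ℕ) ≤ a * q := Nat.one_le_iff_ne_zero.mpr (by positivity)
    exact_mod_cast this
  have hD0abs : -(D0.natAbs : ℤ) ≤ D0 := by omega
  have hS0abs : -(S0.natAbs : ℤ) ≤ S0 := by omega
  have hDpos : 0 < D := by
    have h2 : t ≤ t * ((a:ℤ) * p) := le_mul_of_one_le_right (le_of_lt ht0) hap1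
    have h3 : (0:ℤ) ≤ (S0.natAbs:ℤ) := by positivity
    rw [hD]; linarith [h2, hD0abs, h3]
  have hqn : (n : ℤ) = (q : ℤ) - p := by
    rw [hn]; push_cast [Nat.cast_sub (le_of_lt hpq)]; ring
  have hSval : S = S0 + t * ((a : ℤ) * q) := by
    rw [hS, hS0, hD, hU, hqn]; ring
  have hSpos : 0 < S := by
    have h2 : t ≤ t * ((a:ℤ) * q) := le_mul_of_one_le_right (le_of_lt ht0) haq1
    have h3 : (0:ℤ) ≤ (D0.natAbs:ℤ) := by positivity
    rw [hSval]; linarith [h2, hS0abs, h3]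
  have hmain : D * q = S * p + (k : ℤ) := by
    rw [hSval, hS0, hD]
    have e : N * D0 + AP * U0 = (k : ℤ) := hsol
    rw [hN, hqn] at e
    rw [hAP] at e
    push_cast at e ⊢
    linear_combination e
  refine ⟨D.toNat, S.toNat, ?_, ?_, ?_, ?_⟩
  · exact by omega
  · exact by omega
  · have hDn : (D.toNat : ℤ) = D := Int.toNat_of_nonneg (le_of_lt hDpos)
    have hSn : (S.toNat : ℤ) = S := Int.toNat_of_nonneg (le_of_lt hSpos)
    have : (D.toNat : ℤ) * q = (S.toNat : ℤ) * p + (k : ℤ) := by rw [hDn, hSn]; exact hmain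
    exact_mod_cast this
  · rw [Nat.modEq_iff_dvd]
    have hDn : (D.toNat : ℤ) = D := Int.toNat_of_nonneg (le_of_lt hDpos)
    have hSn : (S.toNat : ℤ) = S := Int.toNat_of_nonneg (le_of_lt hSpos)
    rw [hDn, hSn, hS]
    exact ⟨-U, by ring⟩
end
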